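/- If a model satisfies IA and M-neutrality with M = [n] (full neutrality), then it is the independence model: f(p)(s) = ∏ᵢ pᵢ(sᵢ) for all p and s. -/

import Mathlib

open MeasureTheory Finset Function

noncomputable section

/-- The uniform probability measure on `[0,1] ⊆ ℝ`. -/
def unif01 : Measure ℝ := volume.restrict (Set.Icc 0 1)

/-- `q` is a probability mass function on `[w] = {1,…,w}`. -/
def IsPMF (w : ℕ) (q : ℕ → ℝ) : Prop :=
  (∀ t, 0 ≤ q t) ∧ (∀ t, t ∉ Finset.Icc 1 w → q t = 0) ∧
    ∑ t ∈ Finset.Icc 1 w, q t = 1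

/-- Collapse of adjacent bins `j` and `j+1`: `q^j(t) = q(t)·1{t ≤ j} + q(t+1)·1{t ≥ j}`. -/
def collapsePM (j : ℕ) (q : ℕ → ℝ) : ℕ → ℝ :=
  fun t => (if t ≤ j then q t else 0) + (if j ≤ t then q (t + 1) else 0)

/-- CDF of a pmf on `{1,…,w}`. -/
def pmfCDF (q : ℕ → ℝ) (t : ℕ) : ℝ := ∑ s ∈ Finset.Icc 1 t, q s

/-- The product box `∏ᵢ {1,…,zᵢ}`. -/
def prodBox {n : ℕ} (z : Fin n → ℕ) : Finset (Fin n → ℕ) :=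
  Fintype.piFinset fun i => Finset.Icc 1 (z i)

/-- `μ` is a joint pmf on `∏ᵢ {1,…,zᵢ}`. -/
def IsJointPMF {n : ℕ} (z : Fin n → ℕ) (μ : (Fin n → ℕ) → ℝ) : Prop :=
  (∀ s, 0 ≤ μ s) ∧ (∀ s, s ∉ prodBox z → μ s = 0) ∧ ∑ s ∈ prodBox z, μ s = 1

/-- The `i`-th marginal of a joint pmf. -/
def jointMarginal {n : ℕ} (z : Fin n → ℕ) (μ : (Fin n → ℕ) → ℝ) (i : Fin n) (t : ℕ) : ℝ :=
  ∑ s ∈ (prodBox z).filter fun s => s i = t, μ s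

/-- Joint CDF of a joint pmf. -/
def jointCDF {n : ℕ} (μ : (Fin n → ℕ) → ℝ) (s : Fin n → ℕ) : ℝ :=
  ∑ t ∈ Fintype.piFinset fun i => Finset.Icc 1 (s i), μ t

/-- A (candidate) model: assigns to each `z` and tuple of marginals a joint pmf. -/
abbrev Model (n : ℕ) := (z : Fin n → ℕ) → (Fin n → ℕ → ℝ) → (Fin n → ℕ) → ℝ

/-- `f` is a model: it returns a joint pmf whose marginals are the inputs. -/
def IsModel {n : ℕ} (f : Model n) : Prop :=
  ∀ z p, (∀ i, IsPMF (z i) (p i)) →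
    IsJointPMF z (f z p) ∧ ∀ i t, jointMarginal z (f z p) i t = p i t

/-- Invariant Aggregation: merging adjacent bins `j, j+1` of marginal `i`
does not affect the joint distribution over unaffected values. -/
def SatisfiesIA {n : ℕ} (f : Model n) : Prop :=
  ∀ z p, (∀ i, IsPMF (z i) (p i)) → ∀ i : Fin n, ∀ j ∈ Finset.Icc 1 (z i - 1),
    ∀ s ∈ prodBox (Function.update z i (z i - 1)),
      f (Function.update z i (z i - 1)) (Function.update p i (collapsePM j (p i))) s =
        (if s i ≤ j then f z p s else 0) +
          (if j ≤ s i then f z p (Function.update s i (s i + 1)) else 0)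

/-- A copula measure: a probability measure on `[0,1]^ι` with standard uniform marginals. -/
def IsCopulaMeasure {ι : Type*} [Fintype ι] (μ : Measure (ι → ℝ)) : Prop :=
  IsProbabilityMeasure μ ∧ ∀ i : ι, μ.map (fun t => t i) = unif01

/-- `C` is a copula: the CDF of a probability measure with uniform marginals. -/
def IsCopula {ι : Type*} [Fintype ι] (C : (ι → ℝ) → ℝ) : Prop :=
  ∃ μ : Measure (ι → ℝ), IsCopulaMeasure μ ∧
    ∀ x : ι → ℝ, (∀ i, x i ∈ Set.Icc (0 : ℝ) 1) →
      (μ {t | ∀ i, t i ≤ x i}).toReal = C x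

/-- `f` is a copula model with copula `C`: `F_{f(p)}(s) = C(F_{p₁}(s₁),…,F_{pₙ}(sₙ))`. -/
def IsCopulaModelWith {n : ℕ} (f : Model n) (C : (Fin n → ℝ) → ℝ) : Prop :=
  IsCopula C ∧ ∀ z p, (∀ i, IsPMF (z i) (p i)) → ∀ s ∈ prodBox z,
    jointCDF (f z p) s = C fun i => pmfCDF (p i) (s i)

/-- The binary distribution `b_t` on `{1,2}` with `b_t(1) = t`, `b_t(2) = 1 - t`. -/
def binPMF (t : ℝ) : ℕ → ℝ := fun s => if s = 1 then t else if s = 2 then 1 - t else 0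

/-- `σ` is a permutation of `{1,…,w}` (fixing everything else). -/
def PermOn (w : ℕ) (σ : Equiv.Perm ℕ) : Prop := ∀ t ∉ Finset.Icc 1 w, σ t = t

/-- `M`-neutrality for `M = {i : (i : ℕ) < m}`: relabelling the bins of a marginal in `M`
just relabels the joint distribution accordingly. -/
def MNeutral {n : ℕ} (f : Model n) (m : ℕ) : Prop :=
  ∀ z p, (∀ i, IsPMF (z i) (p i)) → ∀ i : Fin n, (i : ℕ) < m →
    ∀ σ : Equiv.Perm ℕ, PermOn (z i) σ → ∀ s ∈ prodBox z,
      f z (Function.update p i fun t => p i (σ t)) s =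
        f z p (Function.update s i (σ (s i)))

/-- A coupling of two pmfs `q₁` on `[w₁]`, `q₂` on `[w₂]`. -/
def IsCoupling (w₁ w₂ : ℕ) (q₁ q₂ : ℕ → ℝ) (μ : ℕ × ℕ → ℝ) : Prop :=
  (∀ a, 0 ≤ μ a) ∧ (∀ a, a ∉ (Finset.Icc 1 w₁) ×ˢ (Finset.Icc 1 w₂) → μ a = 0) ∧
    (∀ s, ∑ t ∈ Finset.Icc 1 w₂, μ (s, t) = q₁ s) ∧
    (∀ t, ∑ s ∈ Finset.Icc 1 w₁, μ (s, t) = q₂ t)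

/-- Diagonal mass of a coupling. -/
def diagMass (w₁ w₂ : ℕ) (μ : ℕ × ℕ → ℝ) : ℝ :=
  ∑ s ∈ Finset.Icc 1 (min w₁ w₂), μ (s, s)

/-- A maximal coupling: a coupling maximizing the diagonal mass. -/
def IsMaxCoupling (w₁ w₂ : ℕ) (q₁ q₂ : ℕ → ℝ) (μ : ℕ × ℕ → ℝ) : Prop :=
  IsCoupling w₁ w₂ q₁ q₂ μ ∧
    ∀ ν, IsCoupling w₁ w₂ q₁ q₂ ν → diagMass w₁ w₂ ν ≤ diagMass w₁ w₂ μ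

/-! Neutrality moves any cell `s` to the all-ones cell `1` (swap `sᵢ` with `1` in each
coordinate), so it suffices to show `f(p)(1) = ∏ᵢ pᵢ(1)`, by induction on `z`. If some
`zᵢ ≥ 3`, merging the last two bins of coordinate `i` does not touch the cell `1` (IA).
If `zᵢ = 2`, the map `t ↦ f(p with pᵢ = b_t)(1)` is nonnegative and additive on `[0,1]`
— its values at `a`, `b` and `a + b` are three ways of merging bins of the 3-bin pmf
`(a, b, 1 - a - b)`, the one at `b` after swapping its first two bins by neutrality —
hence linear; its value at `t = 1` is computed by merging coordinate `i` into one bin. -/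

theorem eq_mul_of_add_of_nonneg {c : ℝ → ℝ}
    (hadd : ∀ a b, 0 ≤ a → 0 ≤ b → a + b ≤ 1 → c (a + b) = c a + c b)
    (hnn : ∀ t, 0 ≤ t → t ≤ 1 → 0 ≤ c t) {t : ℝ} (ht0 : 0 ≤ t) (ht1 : t ≤ 1) :
    c t = t * c 1 := by
  have hsub : ∀ a b, 0 ≤ a → a ≤ b → b ≤ 1 → c b = c a + c (b - a) :=
    fun a b ha hab hb => by
      simpa using hadd a (b - a) ha (by linarith) (by linarith)
  have hmono : ∀ a b, 0 ≤ a → a ≤ b → b ≤ 1 → c a ≤ c b := fun a b ha hab hb => by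
    linarith [hsub a b ha hab hb, hnn (b - a) (by linarith) (by linarith)]
  have hnat : ∀ x : ℝ, 0 ≤ x → ∀ k : ℕ, k * x ≤ 1 → c (k * x) = k * c x := by
    intro x hx k
    induction k with
    | zero => intro _; simpa using hadd 0 0 le_rfl le_rfl (by norm_num)
    | succ k ih =>
      intro hk
      push_cast at hk ⊢
      rw [add_one_mul] at hk ⊢
      rw [hadd _ _ (by positivity) hx hk, ih (by linarith)]
      ring
  -- with `k = ⌊s m⌋`, monotonicity gives `c s ≥ c (k / m) = (k / m) c 1`
  have hlow : ∀ m : ℕ, 0 < m → ∀ s, 0 ≤ s → s ≤ 1 → s * c 1 - c 1 / m ≤ c s := by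
    intro m hm s hs0 hs1
    have hm' : (0 : ℝ) < m := by exact_mod_cast hm
    have hc1 : c 1 = m * c (1 / m) := by
      simpa [hm'.ne'] using hnat (1 / m) (by positivity) m (by simp [hm'.ne'])
    set k := ⌊s * m⌋₊
    have hk1 : (k : ℝ) ≤ s * m := Nat.floor_le (by positivity)
    have hk2 : s * m < k + 1 := Nat.lt_floor_add_one _
    have hks : (k : ℝ) * (1 / m) ≤ s := by rw [mul_one_div, div_le_iff₀ hm']; exact hk1
    have hks' : s - 1 / m ≤ k * (1 / m) := by
      rw [mul_one_div, sub_le_iff_le_add, ← add_div, le_div_iff₀ hm']; linarith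
    calc s * c 1 - c 1 / m = (s - 1 / m) * c 1 := by ring
      _ ≤ k * (1 / m) * c 1 := mul_le_mul_of_nonneg_right hks' (hnn 1 zero_le_one le_rfl)
      _ = c (k * (1 / m)) := by
        rw [hnat _ (by positivity) k (hks.trans hs1), hc1]; field_simp
      _ ≤ c s := hmono _ _ (by positivity) hks hs1
  -- the upper bound is the lower bound at `1 - t`, as `c 1 = c t + c (1 - t)`
  have hbound : ∀ m : ℕ, 0 < m → |c t - t * c 1| ≤ c 1 / m := by
    intro m hm
    have h1 := hlow m hm t ht0 ht1
    have h2 := hlow m hm (1 - t) (by linarith) (by linarith)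
    have h3 := hsub t 1 ht0 ht1 le_rfl
    rw [abs_le]
    constructor <;> linarith
  have hlim := ge_of_tendsto (tendsto_const_div_atTop_nhds_zero_nat (c 1))
    (Filter.eventually_atTop.2 ⟨1, hbound⟩)
  exact sub_eq_zero.1 (abs_nonpos_iff.1 hlim)

namespace IsPMF

variable {w : ℕ} {q : ℕ → ℝ}

theorem one_le (h : IsPMF w q) : 1 ≤ w := by
  by_contra hw
  simpa [Finset.Icc_eq_empty hw] using h.2.2

theorem apply_le_one (h : IsPMF w q) (t : ℕ) : q t ≤ 1 := by
  by_cases ht : t ∈ Icc 1 w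
  · exact h.2.2 ▸ single_le_sum (fun s _ => h.1 s) ht
  · simp [h.2.1 t ht]

theorem comp_perm (h : IsPMF w q) {σ : Equiv.Perm ℕ} (hσ : PermOn w σ) :
    IsPMF w fun t => q (σ t) := by
  refine ⟨fun t => h.1 _, fun t ht => show q (σ t) = 0 by rw [hσ t ht, h.2.1 t ht], ?_⟩
  rw [σ.sum_comp _ q fun t ht => by_contra fun h' => ht (hσ t h'), h.2.2]

theorem collapsePM (h : IsPMF w q) {j : ℕ} (hj : j ∈ Icc 1 (w - 1)) :
    IsPMF (w - 1) (collapsePM j q) := by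
  rw [mem_Icc] at hj
  refine ⟨fun t => ?_, fun t ht => ?_, ?_⟩
  · unfold _root_.collapsePM
    have := h.1 t
    have := h.1 (t + 1)
    split_ifs <;> linarith
  · rw [mem_Icc] at ht
    rcases Nat.eq_zero_or_pos t with rfl | ht0
    · simp [_root_.collapsePM, h.2.1 0 (by simp), show ¬j ≤ 0 by omega]
    · simp [_root_.collapsePM, show ¬t ≤ j by omega, h.2.1 (t + 1) (by rw [mem_Icc]; omega)]
  · have hlow : (Icc 1 (w - 1)).filter (· ≤ j) = Ico 1 (j + 1) := by
      ext; simp only [mem_filter, mem_Icc, mem_Ico]; omega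
    have hhigh : (Icc 1 (w - 1)).filter (j ≤ ·) = Ico j w := by
      ext; simp only [mem_filter, mem_Icc, mem_Ico]; omega
    simp only [_root_.collapsePM, sum_add_distrib, ← sum_filter, hlow, hhigh]
    rw [sum_Ico_add', sum_Ico_consecutive _ (by omega) (by omega), Ico_add_one_right_eq_Icc, h.2.2]

end IsPMF

theorem isPMF_binPMF {t : ℝ} (h0 : 0 ≤ t) (h1 : t ≤ 1) : IsPMF 2 (binPMF t) := by
  refine ⟨fun s => ?_, fun s hs => ?_, ?_⟩
  · unfold binPMF
    split_ifs <;> linarith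
  · simp only [mem_Icc] at hs
    simp [binPMF, show s ≠ 1 by omega, show s ≠ 2 by omega]
  · simp [binPMF, show Icc 1 2 = {1, 2} by decide]

theorem eq_binPMF {q : ℕ → ℝ} (h : IsPMF 2 q) : q = binPMF (q 1) := by
  have hsum : q 1 + q 2 = 1 := by simpa [show Icc 1 2 = {1, 2} by decide] using h.2.2
  funext t
  unfold binPMF
  split_ifs with h1 h2
  · rw [h1]
  · rw [h2]; linarith
  · exact h.2.1 t (by rw [mem_Icc]; omega)

theorem exists_isPMF_three {a b : ℝ} (ha : 0 ≤ a) (hb : 0 ≤ b) (hab : a + b ≤ 1) :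
    ∃ q, IsPMF 3 q ∧ q 1 = a ∧ q 2 = b := by
  refine ⟨fun t => if t = 1 then a else if t = 2 then b else if t = 3 then 1 - a - b else 0,
    ⟨fun t => ?_, fun t ht => ?_, ?_⟩, by simp, by simp⟩
  · dsimp only
    split_ifs <;> linarith
  · simp only [mem_Icc] at ht
    simp [show t ≠ 1 by omega, show t ≠ 2 by omega, show t ≠ 3 by omega]
  · simp [show Icc 1 3 = {1, 2, 3} by decide]

theorem permOn_swap {w a b : ℕ} (ha : a ∈ Icc 1 w) (hb : b ∈ Icc 1 w) :
    PermOn w (Equiv.swap a b) := fun t ht =>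
  Equiv.swap_apply_of_ne_of_ne (by rintro rfl; exact ht ha) (by rintro rfl; exact ht hb)

theorem forall_isPMF_update {n : ℕ} {z : Fin n → ℕ} {p : Fin n → ℕ → ℝ}
    (hp : ∀ k, IsPMF (z k) (p k)) {i : Fin n} {w : ℕ} {q : ℕ → ℝ} (hq : IsPMF w q) :
    ∀ k, IsPMF (update z i w k) (update p i q k) := by
  intro k
  rcases eq_or_ne k i with rfl | hk
  · simpa using hq
  · simpa [hk] using hp k

section Model

variable {n : ℕ} {z : Fin n → ℕ} {p : Fin n → ℕ → ℝ} {f : Model n}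

theorem mem_prodBox {s : Fin n → ℕ} : s ∈ prodBox z ↔ ∀ i, s i ∈ Icc 1 (z i) :=
  Fintype.mem_piFinset

theorem one_mem_prodBox (hz : ∀ i, 1 ≤ z i) : 1 ∈ prodBox z :=
  mem_prodBox.2 fun i => mem_Icc.2 ⟨le_rfl, hz i⟩

theorem update_mem_prodBox {s : Fin n → ℕ} (hs : s ∈ prodBox z) {i : Fin n} {t : ℕ}
    (ht : t ∈ Icc 1 (z i)) : update s i t ∈ prodBox z := by
  refine mem_prodBox.2 fun k => ?_
  rcases eq_or_ne k i with rfl | hk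
  · simpa using ht
  · simpa [hk] using mem_prodBox.1 hs k

theorem one_mem_prodBox_update (hp : ∀ i, IsPMF (z i) (p i)) {i : Fin n} (hz : 2 ≤ z i) :
    1 ∈ prodBox (update z i (z i - 1)) := by
  refine one_mem_prodBox fun k => ?_
  rcases eq_or_ne k i with rfl | hk
  · rw [update_self]; omega
  · simpa [hk] using (hp k).one_le

theorem prod_update_apply {ι α M : Type*} [Fintype ι] [DecidableEq ι] [CommMonoid M]
    (p : ι → α → M) (i : ι) (q : α → M) (s : ι → α) :
    ∏ k, update p i q k (s k) = q (s i) * ∏ k ∈ {i}ᶜ, p k (s k) := by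
  simp only [apply_update fun k (r : α → M) => r (s k), compl_eq_univ_sdiff]
  exact prod_update_of_mem (mem_univ i) _ _

theorem IsModel.apply_eq_zero (hf : IsModel f) (hp : ∀ i, IsPMF (z i) (p i))
    {s : Fin n → ℕ} {i : Fin n} (h : p i (s i) = 0) : f z p s = 0 := by
  obtain ⟨⟨hnn, hout, -⟩, hmarg⟩ := hf z p hp
  by_cases hs : s ∈ prodBox z
  · have hm := hmarg i (s i)
    rw [h, jointMarginal, sum_eq_zero_iff_of_nonneg fun t _ => hnn t] at hm
    exact hm s (mem_filter.2 ⟨hs, rfl⟩)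
  · exact hout s hs

theorem IsModel.apply_one_of_forall_eq_one (hf : IsModel f) (hp : ∀ i, IsPMF (z i) (p i))
    (hz : ∀ i, z i = 1) : f z p 1 = ∏ i, p i 1 := by
  have hbox : prodBox z = {1} := by
    ext s
    simp only [mem_prodBox, hz, Icc_self, mem_singleton, funext_iff, Pi.one_apply]
  have hp1 : ∀ i, p i 1 = 1 := fun i => by simpa [hz i] using (hp i).2.2
  simpa [hbox, hp1] using (hf z p hp).1.2.2

theorem MNeutral.apply_eq_apply_update_one (hN : MNeutral f n) (hp : ∀ i, IsPMF (z i) (p i))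
    {s : Fin n → ℕ} (hs : s ∈ prodBox z) (i : Fin n) :
    f z p s = f z (update p i fun t => p i (Equiv.swap (s i) 1 t)) (update s i 1) := by
  have hσ := permOn_swap (mem_prodBox.1 hs i) (mem_Icc.2 ⟨le_rfl, (hp i).one_le⟩)
  have := hN z p hp i i.isLt _ hσ (update s i 1)
    (update_mem_prodBox hs (mem_Icc.2 ⟨le_rfl, (hp i).one_le⟩))
  simpa using this.symm

theorem MNeutral.apply_eq_prod_of_apply_one (hN : MNeutral f n)
    (h1 : ∀ p, (∀ i, IsPMF (z i) (p i)) → f z p 1 = ∏ i, p i 1)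
    (hp : ∀ i, IsPMF (z i) (p i)) {s : Fin n → ℕ} (hs : s ∈ prodBox z) :
    f z p s = ∏ i, p i (s i) := by
  suffices ∀ S : Finset (Fin n), ∀ p s, (∀ i, IsPMF (z i) (p i)) → s ∈ prodBox z →
      (∀ i ∉ S, s i = 1) → f z p s = ∏ i, p i (s i) from
    this univ p s hp hs (by simp)
  intro S
  induction S using Finset.induction_on with
  | empty =>
    intro p s hp _ hs1
    obtain rfl : s = 1 := funext fun i => hs1 i (notMem_empty i)
    exact h1 p hp
  | insert i S _ ih =>
    intro p s hp hs hs1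
    have hσ := permOn_swap (mem_prodBox.1 hs i) (mem_Icc.2 ⟨le_rfl, (hp i).one_le⟩)
    rw [hN.apply_eq_apply_update_one hp hs i,
      ih _ _ (by simpa using forall_isPMF_update (i := i) hp ((hp i).comp_perm hσ))
        (update_mem_prodBox hs (mem_Icc.2 ⟨le_rfl, (hp i).one_le⟩))
        (fun k hk => by
          rcases eq_or_ne k i with rfl | hki
          · simp
          · simpa [hki] using hs1 k (by simp [hki, hk]))]
    refine prod_congr rfl fun k _ => ?_
    rcases eq_or_ne k i with rfl | hki
    · simp
    · simp [hki]

theorem SatisfiesIA.apply_one_collapse_of_two_le (hIA : SatisfiesIA f)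
    (hp : ∀ i, IsPMF (z i) (p i)) {i : Fin n} {j : ℕ} (hj : j ∈ Icc 2 (z i - 1)) :
    f (update z i (z i - 1)) (update p i (collapsePM j (p i))) 1 = f z p 1 := by
  rw [mem_Icc] at hj
  have := hIA z p hp i j (mem_Icc.2 ⟨by omega, hj.2⟩) 1
    (one_mem_prodBox_update hp (by omega))
  simpa [show 1 ≤ j by omega, show ¬j ≤ 1 by omega] using this

theorem SatisfiesIA.apply_one_collapse_one (hIA : SatisfiesIA f)
    (hp : ∀ i, IsPMF (z i) (p i)) {i : Fin n} (hz : 2 ≤ z i) :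
    f (update z i (z i - 1)) (update p i (collapsePM 1 (p i))) 1 =
      f z p 1 + f z p (update 1 i 2) := by
  have := hIA z p hp i 1 (mem_Icc.2 ⟨le_rfl, by omega⟩) 1 (one_mem_prodBox_update hp hz)
  simpa using this

theorem apply_one_binPMF_add (hIA : SatisfiesIA f) (hN : MNeutral f n)
    (hp : ∀ i, IsPMF (z i) (p i)) {i : Fin n} (hz : z i = 2) {a b : ℝ} (ha : 0 ≤ a)
    (hb : 0 ≤ b) (hab : a + b ≤ 1) :
    f z (update p i (binPMF (a + b))) 1 =
      f z (update p i (binPMF a)) 1 + f z (update p i (binPMF b)) 1 := by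
  obtain ⟨q, hq, hq1, hq2⟩ := exists_isPMF_three ha hb hab
  have hσ : PermOn 3 (Equiv.swap 1 2) := permOn_swap (by decide) (by decide)
  have hq' := hq.comp_perm hσ
  have hP := forall_isPMF_update (i := i) hp hq
  have hP' := forall_isPMF_update (i := i) hp hq'
  have hz' : update (update z i 3) i 2 = z := by simp [← hz]
  have hcollapse : ∀ {r : ℕ → ℝ} {j : ℕ}, IsPMF 3 r → j ∈ Icc 1 2 →
      collapsePM j r = binPMF (collapsePM j r 1) := fun hr hj => eq_binPMF (hr.collapsePM hj)
  have hab' := hIA.apply_one_collapse_one hP (i := i) (by simp)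
  have ha' := hIA.apply_one_collapse_of_two_le hP (i := i) (j := 2) (by simp)
  have hb' := hIA.apply_one_collapse_of_two_le hP' (i := i) (j := 2) (by simp)
  have hswap := hN.apply_eq_apply_update_one hP
    (update_mem_prodBox (one_mem_prodBox fun k => (hP k).one_le) (i := i) (t := 2) (by simp)) i
  simp only [update_idem, update_self, Nat.add_one_sub_one, hz'] at hab' ha' hb' hswap
  rw [hcollapse hq (by decide)] at hab' ha'
  rw [hcollapse hq' (by decide)] at hb'
  simp only [collapsePM, le_refl, ↓reduceIte, hq1, hq2, Nat.reduceAdd, Nat.one_le_ofNat,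
    Nat.not_ofNat_le_one, add_zero, Equiv.swap_apply_left, Equiv.swap_comm, update_one]
    at hab' ha' hb' hswap
  rw [hab', ha', hb', hswap]

theorem apply_one_of_three_le (hIA : SatisfiesIA f) (hp : ∀ i, IsPMF (z i) (p i)) {i : Fin n}
    (hz : 3 ≤ z i)
    (ih : ∀ p', (∀ k, IsPMF (update z i (z i - 1) k) (p' k)) →
      f (update z i (z i - 1)) p' 1 = ∏ k, p' k 1) :
    f z p 1 = ∏ k, p k 1 := by
  have hj : z i - 1 ∈ Icc 1 (z i - 1) := mem_Icc.2 ⟨by omega, le_rfl⟩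
  rw [← hIA.apply_one_collapse_of_two_le hp (i := i) (mem_Icc.2 ⟨by omega, le_rfl⟩),
    ih _ (forall_isPMF_update hp ((hp i).collapsePM hj)), prod_update_apply,
    Fintype.prod_eq_mul_prod_compl i]
  simp [collapsePM, show 1 ≤ z i - 1 by omega, show ¬z i - 1 ≤ 1 by omega]

theorem apply_one_of_eq_two (hf : IsModel f) (hIA : SatisfiesIA f) (hN : MNeutral f n)
    (hp : ∀ i, IsPMF (z i) (p i)) {i : Fin n} (hz : z i = 2)
    (ih : ∀ p', (∀ k, IsPMF (update z i (z i - 1) k) (p' k)) →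
      f (update z i (z i - 1)) p' 1 = ∏ k, p' k 1) :
    f z p 1 = ∏ k, p k 1 := by
  have hbin : ∀ t, 0 ≤ t → t ≤ 1 → ∀ k, IsPMF (z k) (update p i (binPMF t) k) :=
    fun t h0 h1 => by simpa [← hz] using forall_isPMF_update (i := i) hp (isPMF_binPMF h0 h1)
  have hlin : f z (update p i (binPMF (p i 1))) 1 = p i 1 * f z (update p i (binPMF 1)) 1 :=
    eq_mul_of_add_of_nonneg (c := fun t => f z (update p i (binPMF t)) 1)
      (fun a b ha hb hab => apply_one_binPMF_add hIA hN hp hz ha hb hab)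
      (fun t h0 h1 => (hf z _ (hbin t h0 h1)).1.1 1) ((hp i).1 1) ((hp i).apply_le_one 1)
  have hone := hIA.apply_one_collapse_one (hbin 1 zero_le_one le_rfl) (i := i) (by omega)
  rw [hf.apply_eq_zero (hbin 1 zero_le_one le_rfl) (s := update 1 i 2) (i := i)
    (by simp [binPMF]), add_zero] at hone
  simp only [update_idem, update_self] at hone
  have hcol : IsPMF (z i - 1) (collapsePM 1 (binPMF 1)) := by
    rw [hz]; exact (isPMF_binPMF zero_le_one le_rfl).collapsePM (by decide)
  rw [← eq_binPMF (hz ▸ hp i), update_eq_self, ← hone, ih _ (forall_isPMF_update hp hcol),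
    prod_update_apply] at hlin
  simpa [Fintype.prod_eq_mul_prod_compl i, collapsePM, binPMF] using hlin

theorem IsModel.apply_one_eq_prod (hf : IsModel f) (hIA : SatisfiesIA f) (hN : MNeutral f n)
    (z : Fin n → ℕ) : ∀ p, (∀ i, IsPMF (z i) (p i)) → f z p 1 = ∏ i, p i 1 := by
  induction z using WellFoundedLT.induction with
  | _ z ih =>
    intro p hp
    by_cases hz : ∃ i, 2 ≤ z i
    · obtain ⟨i, hi⟩ := hz
      have ih' := ih _ (update_lt_self_iff.2 (by omega : z i - 1 < z i))
      rcases hi.eq_or_lt with h2 | h3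
      · exact apply_one_of_eq_two hf hIA hN hp h2.symm ih'
      · exact apply_one_of_three_le hIA hp h3 ih'
    · simp only [not_exists, not_le] at hz
      exact hf.apply_one_of_forall_eq_one hp fun i => by
        have := (hp i).one_le
        have := hz i
        omega

end Model

/-- a model satisfying IA and full neutrality (`M = [n]`) is the
independence model. -/
theorem IA_neutral_is_independence (n : ℕ) (f : Model n) (hf : IsModel f)
    (hIA : SatisfiesIA f) (hN : MNeutral f n) :
    ∀ z p, (∀ i, IsPMF (z i) (p i)) → ∀ s ∈ prodBox z,
      f z p s = ∏ i, p i (s i) := by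
  intro z p hp s hs
  exact hN.apply_eq_prod_of_apply_one (hf.apply_one_eq_prod hIA hN z) hp hs
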